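/- Let n ≥ 3, U ⊆ ℝ^n open, μ ∈ ℝ, let v : U → ℝ be continuously differentiable, and let 1 ≤ i < j ≤ n and 1 ≤ k < l ≤ n with (i, j) ≠ (k, l). Set ω_{ij}(x) = x_j e_i − x_i e_j and ω_{kl}(x) = x_l e_k − x_k e_l. Then at every point of U: (2μ e(v ω_{ij}), e(v ω_{kl})) = μ ( x_j ∂_i v − x_i ∂_j v )( x_l ∂_k v − x_k ∂_l v ) + μ c |∇v|^2, where c = 0 if {i, j} ∩ {k, l} = ∅, c = x_j x_l if i = k, c = x_i x_k if j = l, c = −x_i x_l if j = k, and c = −x_j x_k if i = l. -/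

import Mathlib

noncomputable section

/-- The strain tensor `e(u)_{ij} = (∂_i u_j + ∂_j u_i)/2` of a vector field `u` on `ℝⁿ`. -/
def strain (n : ℕ) (u : EuclideanSpace ℝ (Fin n) → EuclideanSpace ℝ (Fin n))
    (x : EuclideanSpace ℝ (Fin n)) (i j : Fin n) : ℝ :=
  (fderiv ℝ (fun y => u y j) x (EuclideanSpace.single i 1)
    + fderiv ℝ (fun y => u y i) x (EuclideanSpace.single j 1)) / 2

lemma fderiv_rot_comp (n : ℕ) (v : EuclideanSpace ℝ (Fin n) → ℝ) (x : EuclideanSpace ℝ (Fin n))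
    (hvd : DifferentiableAt ℝ v x) (i j a b : Fin n) :
    fderiv ℝ (fun y => (v y • (y j • EuclideanSpace.single i (1:ℝ)
        - y i • EuclideanSpace.single j (1:ℝ))) b) x (EuclideanSpace.single a 1)
    = v x * ((if i = b then 1 else 0) * (if j = a then (1:ℝ) else 0)
        - (if j = b then 1 else 0) * (if i = a then 1 else 0))
      + (x j * (if i = b then 1 else 0) - x i * (if j = b then 1 else 0))
          * fderiv ℝ v x (EuclideanSpace.single a 1) := by
  set A : ℝ := if i = b then 1 else 0 with hA
  set B : ℝ := if j = b then 1 else 0 with hB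
  have hA' : (EuclideanSpace.single i (1:ℝ)) b = A := by
    simp [EuclideanSpace.single_apply, hA, eq_comm]
  have hB' : (EuclideanSpace.single j (1:ℝ)) b = B := by
    simp [EuclideanSpace.single_apply, hB, eq_comm]
  set φ : EuclideanSpace ℝ (Fin n) →L[ℝ] ℝ :=
    A • (EuclideanSpace.proj j : EuclideanSpace ℝ (Fin n) →L[ℝ] ℝ)
      - B • (EuclideanSpace.proj i : EuclideanSpace ℝ (Fin n) →L[ℝ] ℝ) with hφ
  have h1 : (fun y => (v y • (y j • EuclideanSpace.single i (1:ℝ)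
      - y i • EuclideanSpace.single j (1:ℝ))) b) = fun y => v y * φ y := by
    funext y
    simp only [PiLp.smul_apply, PiLp.sub_apply, smul_eq_mul, hA', hB', hφ,
      ContinuousLinearMap.coe_sub', Pi.sub_apply, ContinuousLinearMap.coe_smul',
      Pi.smul_apply, PiLp.proj_apply]
    ring
  rw [h1, show (fun y => v y * φ y) = v * ⇑φ from rfl, (hvd.hasFDerivAt.mul φ.hasFDerivAt).fderiv]
  have hja : (EuclideanSpace.single a (1:ℝ)) j = if j = a then 1 else 0 := by
    simp [EuclideanSpace.single_apply]
  have hia : (EuclideanSpace.single a (1:ℝ)) i = if i = a then 1 else 0 := by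
    simp [EuclideanSpace.single_apply]
  simp only [ContinuousLinearMap.add_apply, ContinuousLinearMap.smul_apply, hφ,
    ContinuousLinearMap.sub_apply, PiLp.proj_apply, smul_eq_mul, hja, hia]
  ring

lemma strain_rot (n : ℕ) (v : EuclideanSpace ℝ (Fin n) → ℝ) (x : EuclideanSpace ℝ (Fin n))
    (hvd : DifferentiableAt ℝ v x) (i j a b : Fin n) :
    strain n (fun y => v y • (y j • EuclideanSpace.single i (1:ℝ)
        - y i • EuclideanSpace.single j (1:ℝ))) x a b
    = (fderiv ℝ v x (EuclideanSpace.single a 1)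
          * (x j * (if i = b then 1 else 0) - x i * (if j = b then 1 else 0))
       + fderiv ℝ v x (EuclideanSpace.single b 1)
          * (x j * (if i = a then 1 else 0) - x i * (if j = a then 1 else 0))) / 2 := by
  rw [strain, fderiv_rot_comp n v x hvd i j a b, fderiv_rot_comp n v x hvd i j b a]
  ring

lemma strain_doublesum (n : ℕ) (μ : ℝ) (g w1 w2 : Fin n → ℝ) :
    (∑ a : Fin n, ∑ b : Fin n,
        2 * μ * ((g a * w1 b + g b * w1 a) / 2) * ((g a * w2 b + g b * w2 a) / 2))
    = μ * (∑ a : Fin n, g a * w1 a) * (∑ a : Fin n, g a * w2 a)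
      + μ * (∑ a : Fin n, w1 a * w2 a) * (∑ a : Fin n, g a ^ 2) := by
  have h : ∀ a b : Fin n,
      2 * μ * ((g a * w1 b + g b * w1 a) / 2) * ((g a * w2 b + g b * w2 a) / 2)
      = μ / 2 * ((g a * w2 a) * (g b * w1 b) + (g a * w1 a) * (g b * w2 b)
          + (g a ^ 2) * (w1 b * w2 b) + (w1 a * w2 a) * (g b ^ 2)) := by
    intro a b; ring
  simp only [h, Finset.mul_sum, ← Finset.sum_mul, ← Finset.mul_sum, Finset.sum_add_distrib,
    ← Finset.sum_mul]
  ring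

lemma strain_deltasum (n : ℕ) (p q : Fin n) :
    (∑ b : Fin n, (if p = b then (1:ℝ) else 0) * (if q = b then 1 else 0))
      = if p = q then 1 else 0 := by
  simp only [ite_mul, one_mul, zero_mul, Finset.sum_ite_eq, Finset.mem_univ, if_true]
  simp [eq_comm]

lemma strain_w12sum (n : ℕ) (x : EuclideanSpace ℝ (Fin n)) (i j k l : Fin n)
    (hij : i < j) (hkl : k < l) (hne : (i, j) ≠ (k, l)) :
    (∑ b : Fin n, (x j * (if i = b then (1:ℝ) else 0) - x i * (if j = b then 1 else 0))
        * (x l * (if k = b then 1 else 0) - x k * (if l = b then 1 else 0)))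
    = (if i = k then x j * x l
        else if j = l then x i * x k
        else if j = k then -(x i * x l)
        else if i = l then -(x j * x k)
        else 0) := by
  have h : ∀ b : Fin n,
      (x j * (if i = b then (1:ℝ) else 0) - x i * (if j = b then 1 else 0))
        * (x l * (if k = b then 1 else 0) - x k * (if l = b then 1 else 0))
      = x j * x l * ((if i = b then (1:ℝ) else 0) * (if k = b then 1 else 0))
        + x i * x k * ((if j = b then (1:ℝ) else 0) * (if l = b then 1 else 0))
        - x j * x k * ((if i = b then (1:ℝ) else 0) * (if l = b then 1 else 0))
        - x i * x l * ((if j = b then (1:ℝ) else 0) * (if k = b then 1 else 0)) := by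
    intro b; ring
  simp only [h, Finset.sum_add_distrib, Finset.sum_sub_distrib, ← Finset.mul_sum,
    strain_deltasum]
  have h1 : i ≠ j := hij.ne
  have h2 : k ≠ l := hkl.ne
  split_ifs with a1 a2 a3 a4 a5 a6 a7 a8 a9 a10 a11 a12 a13 a14 a15 <;> subst_vars <;>
    first
      | ring1
      | exact absurd (hij.trans hkl) (lt_irrefl _)
      | exact absurd (hkl.trans hij) (lt_irrefl _)
      | simp_all

lemma strain_gwsum (n : ℕ) (x : EuclideanSpace ℝ (Fin n)) (g : Fin n → ℝ) (p q : Fin n) :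
    (∑ a : Fin n, g a * (x q * (if p = a then (1:ℝ) else 0) - x p * (if q = a then 1 else 0)))
      = x q * g p - x p * g q := by
  have h : ∀ a : Fin n,
      g a * (x q * (if p = a then (1:ℝ) else 0) - x p * (if q = a then 1 else 0))
      = x q * (if p = a then g a else 0) - x p * (if q = a then g a else 0) := by
    intro a; split_ifs <;> ring
  simp only [h, Finset.sum_sub_distrib, ← Finset.mul_sum, Finset.sum_ite_eq,
    Finset.mem_univ, if_true]

/-- Frobenius product of the strains of `v ω_{ij}` and `v ω_{kl}` for two distinct
rotations `ω_{ij}(x) = x_j e_i − x_i e_j`, `ω_{kl}(x) = x_l e_k − x_k e_l`: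
`(2μ e(v ω_{ij}), e(v ω_{kl})) = μ (x_j ∂_i v − x_i ∂_j v)(x_l ∂_k v − x_k ∂_l v)
+ μ c |∇v|²`, where `c = 0` if `{i,j} ∩ {k,l} = ∅`, `c = x_j x_l` if `i = k`,
`c = x_i x_k` if `j = l`, `c = −x_i x_l` if `j = k`, and `c = −x_j x_k` if `i = l`. -/
theorem strain_inner_product_two_rotational_fields
    (n : ℕ) (hn : 3 ≤ n) (U : Set (EuclideanSpace ℝ (Fin n))) (hU : IsOpen U)
    (μ : ℝ) (v : EuclideanSpace ℝ (Fin n) → ℝ) (hv : ContDiffOn ℝ 1 v U)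
    (i j k l : Fin n) (hij : i < j) (hkl : k < l) (hne : (i, j) ≠ (k, l))
    (x : EuclideanSpace ℝ (Fin n)) (hx : x ∈ U) :
    (∑ a : Fin n, ∑ b : Fin n,
        2 * μ * strain n
            (fun y => v y • (y j • EuclideanSpace.single i (1 : ℝ)
              - y i • EuclideanSpace.single j (1 : ℝ))) x a b *
          strain n
            (fun y => v y • (y l • EuclideanSpace.single k (1 : ℝ)
              - y k • EuclideanSpace.single l (1 : ℝ))) x a b)
      = μ * (x j * fderiv ℝ v x (EuclideanSpace.single i 1)
            - x i * fderiv ℝ v x (EuclideanSpace.single j 1)) *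
          (x l * fderiv ℝ v x (EuclideanSpace.single k 1)
            - x k * fderiv ℝ v x (EuclideanSpace.single l 1))
        + μ * (if i = k then x j * x l
            else if j = l then x i * x k
            else if j = k then -(x i * x l)
            else if i = l then -(x j * x k)
            else 0) *
            (∑ a : Fin n, fderiv ℝ v x (EuclideanSpace.single a 1) ^ 2) := by
  have hvd : DifferentiableAt ℝ v x :=
    (hv.contDiffAt (hU.mem_nhds hx)).differentiableAt one_ne_zero
  set g : Fin n → ℝ := fun a => fderiv ℝ v x (EuclideanSpace.single a 1) with hg
  set w1 : Fin n → ℝ :=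
    fun b => x j * (if i = b then 1 else 0) - x i * (if j = b then 1 else 0) with hw1
  set w2 : Fin n → ℝ :=
    fun b => x l * (if k = b then 1 else 0) - x k * (if l = b then 1 else 0) with hw2
  have step1 : (∑ a : Fin n, ∑ b : Fin n,
        2 * μ * strain n
            (fun y => v y • (y j • EuclideanSpace.single i (1 : ℝ)
              - y i • EuclideanSpace.single j (1 : ℝ))) x a b *
          strain n
            (fun y => v y • (y l • EuclideanSpace.single k (1 : ℝ)
              - y k • EuclideanSpace.single l (1 : ℝ))) x a b)
      = ∑ a : Fin n, ∑ b : Fin n,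
          2 * μ * ((g a * w1 b + g b * w1 a) / 2) * ((g a * w2 b + g b * w2 a) / 2) := by
    refine Finset.sum_congr rfl fun a _ => Finset.sum_congr rfl fun b _ => ?_
    rw [strain_rot n v x hvd i j a b, strain_rot n v x hvd k l a b]
  rw [step1, strain_doublesum n μ g w1 w2]
  have e1 : (∑ a : Fin n, g a * w1 a) = x j * g i - x i * g j := strain_gwsum n x g i j
  have e2 : (∑ a : Fin n, g a * w2 a) = x l * g k - x k * g l := strain_gwsum n x g k l
  have e3 := strain_w12sum n x i j k l hij hkl hne
  rw [e1, e2]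
  rw [show (∑ a : Fin n, w1 a * w2 a)
      = (if i = k then x j * x l
          else if j = l then x i * x k
          else if j = k then -(x i * x l)
          else if i = l then -(x j * x k)
          else 0) from e3]
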